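/- Let R(G₂) = ℤ[ω₁,ω₂,y₃]/⟨g₂, r₃, r₆⟩, where g₂ = 3ω₁² − 3ω₁ω₂ + ω₂², r₃ = 2y₃ − ω₁³, r₆ = y₃². Then R(G₂) is generated, as a module over the subring generated by the images of ω₁ and ω₂, by the images of 1 and y₃. -/

import Mathlib

/-! Since y₃² = 0, the span of 1 and y₃ over the subring generated by ω₁ and ω₂ is closed under
multiplication, hence a subalgebra; it contains the images of all three generators of the
polynomial ring, so it is the whole quotient. -/

open MvPolynomial

noncomputable section

/-- The polynomial ring ℤ[ω₁,ω₂,y₃]: ω₁ = X 0, ω₂ = X 1, y₃ = X 2. -/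
abbrev G2Poly : Type := MvPolynomial (Fin 3) ℤ

/-- The ideal ⟨g₂, r₃, r₆⟩. -/
def G2rels : Ideal G2Poly :=
  Ideal.span
    ({ 3 * X 0 ^ 2 - 3 * X 0 * X 1 + X 1 ^ 2,   -- g₂
       2 * X 2 - X 0 ^ 3,                        -- r₃
       X 2 ^ 2 } :                               -- r₆
      Set G2Poly)

/-- R(G₂) = ℤ[ω₁,ω₂,y₃]/⟨g₂, r₃, r₆⟩. -/
abbrev RG2 : Type := G2Poly ⧸ G2rels

theorem Submodule.span_one_self_eq_top_of_mul_self_mem {A S : Type*} [CommSemiring A]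
    [CommSemiring S] [Algebra A S] {y : S} (hgen : Algebra.adjoin A {y} = ⊤)
    (hy : y * y ∈ Submodule.span A {1, y}) :
    Submodule.span A {1, y} = ⊤ := by
  set M := Submodule.span A ({1, y} : Set S)
  have h1 : (1 : S) ∈ M := Submodule.subset_span (by simp)
  have hy' : y ∈ M := Submodule.subset_span (by simp)
  have hmul : M * M ≤ M := by
    rw [Submodule.span_mul_span, Submodule.span_le]
    simp only [Set.mul_subset_iff, Set.mem_insert_iff, Set.mem_singleton_iff, forall_eq_or_imp,
      forall_eq, one_mul, mul_one]
    exact ⟨⟨h1, hy'⟩, hy', hy⟩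
  let B : Subalgebra A S :=
    M.toSubalgebra h1 fun a b ha hb ↦ hmul (Submodule.mul_mem_mul ha hb)
  have hB : B = ⊤ := top_le_iff.mp <| hgen ▸ Algebra.adjoin_le (Set.singleton_subset_iff.mpr hy')
  simpa [B] using congrArg Subalgebra.toSubmodule hB

theorem Algebra.adjoin_adjoin_eq_top_of_adjoin_union_eq_top {R S : Type*} [CommSemiring R]
    [CommSemiring S] [Algebra R S] {s t : Set S} (h : Algebra.adjoin R (s ∪ t) = ⊤) :
    Algebra.adjoin (Algebra.adjoin R s) t = ⊤ :=
  Subalgebra.restrictScalars_injective R <| by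
    rw [← Algebra.adjoin_union_eq_adjoin_adjoin, h, Subalgebra.restrictScalars_top]

theorem MvPolynomial.adjoin_range_mk_X_eq_top {σ R : Type*} [CommRing R]
    (I : Ideal (MvPolynomial σ R)) :
    Algebra.adjoin R (Set.range fun i ↦ Ideal.Quotient.mk I (X i)) = ⊤ := by
  have := Algebra.adjoin_image R (Ideal.Quotient.mkₐ R I) (Set.range X)
  rwa [adjoin_range_X, Algebra.map_top, (AlgHom.range_eq_top _).mpr
    (Ideal.Quotient.mkₐ_surjective R I), ← Set.range_comp] at this

/-- Proposition 1 for G = G₂: R(G₂) is generated, as a module over the subring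
    generated by the images of ω₁ and ω₂, by the images of 1 and y₃. -/
theorem RG2_spanned_by_one_y3 :
    Submodule.span
      (Algebra.adjoin ℤ
        ({Ideal.Quotient.mk G2rels (X 0), Ideal.Quotient.mk G2rels (X 1)} : Set RG2))
      ({1, Ideal.Quotient.mk G2rels (X 2)} : Set RG2) = ⊤ := by
  set q := Ideal.Quotient.mk G2rels
  have hgens : {q (X 0), q (X 1)} ∪ {q (X 2)} = Set.range fun i ↦ q (X i) := by
    ext
    simp only [Set.union_singleton, Set.mem_insert_iff, Set.mem_singleton_iff, Set.mem_range,
      Fin.exists_fin_succ, Fin.exists_fin_zero, eq_comm]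
    tauto
  have hy : q (X 2) * q (X 2) = 0 := by
    rw [← map_mul, ← sq, Ideal.Quotient.eq_zero_iff_mem]
    exact Ideal.subset_span (by simp)
  refine Submodule.span_one_self_eq_top_of_mul_self_mem
    (Algebra.adjoin_adjoin_eq_top_of_adjoin_union_eq_top ?_) (hy ▸ zero_mem _)
  rw [hgens]
  exact MvPolynomial.adjoin_range_mk_X_eq_top G2rels
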